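/- Let q be an odd prime and set c_q := Σ_{j=1}^{q−1} j·j*. There exists a polynomial h ∈ ℚ[x] of degree at most q such that h(x) = Li_{1−q}(−x/(1−x)) for every rational x ≠ 1, and every coefficient of the polynomial f_q(x) − c_q·h(x) lies in q²ℤ_(q); moreover q ∤ c_q. In other words, f_q(x) ≡ c_q · Li_{1−q}(−x/(1−x)) (mod q²). -/

import Mathlib

/-!
Let `v_k(j) ∈ [1, q - 1]` be the residue of `k / j` mod `q` and `g_k = ∑_j j · v_k(j)`, so that
`c_q = g_1`. Summing over `l = v_k(j)` and using `C(t, k) / t = C(t - 1, k - 1) / k`, the `t`-th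
coefficient of `f_q` is `∑_k (-1)^k C(t - 1, k - 1) g_k / k`, while `Li_{1-q}(-x / (1 - x))` is the
polynomial with `t`-th coefficient `∑_k (-1)^k C(t - 1, k - 1) k^(q - 1)`. So everything reduces to
`g_k ≡ k^q c_q (mod q²)` for `q ∤ k`; the term `k = q` is `c_q q^(q - 1)`, divisible by `q²` as `q ≥ 3`.

Modulo `q²`, `a^q` only depends on `a` mod `q`, and `D(a) = a - a^q` satisfies
`D(ab) = b^q D(a) + a^q D(b)` because `D(a) D(b) ≡ 0`. As `j · v_k(j) ≡ k (mod q)`, this gives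
`j · v_k(j) ≡ k^q (1 + E(j) + E(v_k(j)))` with `E(j) = (j*)^q D(j)`, and since `j ↦ v_k(j)` permutes
`[1, q - 1]`, `g_k ≡ k^q (q - 1 + 2 ∑_j E(j))`, where the bracket is `g_1`.
Finally `c_q ≡ q - 1 (mod q)`.
-/

open Finset Polynomial

/-- `Li s` is the polylogarithm of negative index, `Li_{-s}(x) = (x d/dx)^s (x/(1-x))`,
viewed as a function `ℚ → ℚ` (well defined away from `x = 1`). -/
noncomputable def Li (s : ℕ) : ℚ → ℚ :=
  (fun f x => x * deriv f x)^[s] (fun x => x / (1 - x))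

/-- `zLocSpan q c x` means `x ∈ c·ℤ_(q)`, i.e. `x = c·(a/b)` with `q ∤ b`. -/
def zLocSpan (q : ℕ) (c x : ℚ) : Prop :=
  ∃ a b : ℤ, ¬ (q : ℤ) ∣ b ∧ x * (b : ℚ) = c * (a : ℚ)

/-- The integer coefficient `Σ_{1≤j,k,l≤q−1, k ≡ jl (mod q)} (−1)^k C(t,k)·j·l`. -/
def fqCoeff (q t : ℕ) : ℤ :=
  ∑ j ∈ Finset.Icc 1 (q-1), ∑ k ∈ Finset.Icc 1 (q-1), ∑ l ∈ Finset.Icc 1 (q-1),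
    if (k : ZMod q) = (j : ZMod q) * (l : ZMod q) then (-1)^k * (t.choose k : ℤ) * j * l else 0

/-- The polynomial `f_q(x) = Σ_{t=1}^q fqCoeff q t · x^t / t ∈ ℚ[x]` (in fact in `ℤ_(q)[x]`). -/
noncomputable def fqPoly (q : ℕ) : Polynomial ℚ :=
  ∑ t ∈ Finset.Icc 1 q, Polynomial.C ((fqCoeff q t : ℚ) / (t : ℚ)) * Polynomial.X ^ t

/-- Reduction of a rational with denominator prime to `N` to `ZMod N`. -/
def ratToZMod (N : ℕ) (x : ℚ) : ZMod N := (x.num : ZMod N) * ((x.den : ℕ) : ZMod N)⁻¹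

/-- The set `S_q = { a − f_q(a) mod q² : a = 0,…,q−1 } ⊆ ℤ/q²ℤ`. -/
def Sq (q : ℕ) : Set (ZMod (q^2)) :=
  { y | ∃ a : ℕ, a < q ∧ y = ratToZMod (q^2) ((a : ℚ) - (fqPoly q).eval (a : ℚ)) }

/-- Congruence modulo the ideal of `ℤ[ζ]` generated by `(1-ζ)^e`, for elements of `ℂ`. -/
def congZeta (ζ : ℂ) (e : ℕ) (x y : ℂ) : Prop :=
  ∃ P : Polynomial ℤ, x - y = (1 - ζ)^e * (Polynomial.aeval ζ P)

/-- `jstar q j` is the representative in `[0, q-1]` of the inverse of `j` mod `q`. -/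
def jstar (q j : ℕ) : ℕ := ((j : ZMod q)⁻¹).val

/-- `istar q a` is the representative in `[0, q-1]` of the inverse of the integer `a` mod `q`. -/
def istar (q : ℕ) (a : ℤ) : ℕ := ((a : ZMod q)⁻¹).val

/-- `μ^{(i)} = ζ^i · ∏_{j=1}^{q−1} (m − n ζ^j)^{j*} ∈ ℤ[ζ_q] ⊆ ℂ`. -/
noncomputable def mu (q : ℕ) (m n : ℤ) (i : ℕ) (ζ : ℂ) : ℂ :=
  ζ^i * ∏ j ∈ Finset.Icc 1 (q-1), ((m : ℂ) - (n : ℂ) * ζ^j)^(jstar q j)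

/-- `𝓕_s(x) = Σ_{t=0}^s Σ_{s₁,…,s_t ≥ 1, s₁+⋯+s_t=s} s!/(s₁!⋯s_t!) x^t`, as a function `ℚ → ℚ`. -/
def Fcal (s : ℕ) (x : ℚ) : ℚ :=
  ∑ t ∈ Finset.range (s+1),
    ∑ c ∈ (Finset.Nat.antidiagonalTuple t s).filter (fun c => ∀ i, 1 ≤ c i),
      (Nat.multinomial Finset.univ c : ℚ) * x ^ t

/-- Coefficientwise reduction of `f_q` mod `q²`. -/
noncomputable def fqBar (q : ℕ) : Polynomial (ZMod (q^2)) :=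
  ∑ t ∈ Finset.Icc 1 q,
    Polynomial.C (ratToZMod (q^2) ((fqCoeff q t : ℚ) / (t : ℚ))) * Polynomial.X ^ t


noncomputable def liPoly : ℕ → ℚ[X]
  | 0 => -X
  | s + 1 => X * (1 - X) * derivative (liPoly s)

def liCoeff (s t : ℕ) : ℚ :=
  ∑ n ∈ Icc 1 t, (-1) ^ n * ((t - 1).choose (n - 1) : ℚ) * (n : ℚ) ^ s

theorem Li_succ_apply (s : ℕ) (t : ℚ) : Li (s + 1) t = t * deriv (Li s) t := by
  rw [Li, Function.iterate_succ_apply']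
  rfl

theorem Li_eq_eval_liPoly (s : ℕ) {t : ℚ} (ht : t ≠ 1) :
    Li s t = (liPoly s).eval (t / (t - 1)) := by
  have ht' : t - 1 ≠ 0 := sub_ne_zero.mpr ht
  induction s generalizing t with
  | zero =>
    simp only [Li, Function.iterate_zero, id_eq, liPoly, eval_neg, eval_X]
    rw [← div_neg, neg_sub]
  | succ s ih =>
    have hLi : Li s =ᶠ[nhds t] fun u => (liPoly s).eval (u / (u - 1)) := by
      filter_upwards [isOpen_compl_singleton.mem_nhds ht] with u hu
      exact ih hu (sub_ne_zero.mpr hu)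
    have hdiv := (hasDerivAt_id' t).div ((hasDerivAt_id' t).sub_const 1) ht'
    have hcomp : HasDerivAt (fun u => (liPoly s).eval (u / (u - 1))) _ t :=
      ((liPoly s).hasDerivAt _).comp t hdiv
    rw [Li_succ_apply, hLi.deriv_eq, hcomp.deriv, liPoly]
    simp only [eval_mul, eval_X, eval_sub, eval_one]
    field_simp

theorem Li_neg_div_one_sub (s : ℕ) {x : ℚ} (hx : x ≠ 1) :
    Li s (-x / (1 - x)) = (liPoly s).eval x := by
  have hx' : 1 - x ≠ 0 := sub_ne_zero.mpr hx.symm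
  have harg : -x / (1 - x) - 1 = -1 / (1 - x) := by
    field_simp
    ring
  have hne : -x / (1 - x) ≠ 1 := by
    rw [← sub_ne_zero, harg]
    simpa using hx'
  rw [Li_eq_eval_liPoly s hne, harg, div_div_div_cancel_right₀ hx', neg_div_neg_eq, div_one]

theorem liCoeff_zero_of_two_le {t : ℕ} (ht : 2 ≤ t) : liCoeff 0 t = 0 := by
  obtain ⟨u, rfl⟩ := Nat.exists_eq_add_of_le' (show 1 ≤ t by omega)
  have h := Int.alternating_sum_range_choose (n := u)
  rw [if_neg (by omega)] at h
  have hQ := congrArg (fun z : ℤ => (z : ℚ)) h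
  push_cast at hQ
  rw [liCoeff, ← Finset.Ico_add_one_right_eq_Icc, Finset.sum_Ico_eq_sum_range, ← neg_eq_zero,
    ← Finset.sum_neg_distrib, ← hQ]
  refine Finset.sum_congr (by simp) fun m _ => ?_
  simp only [add_tsub_cancel_right, add_tsub_cancel_left, pow_zero, mul_one, pow_add]
  ring

theorem natCast_mul_choose_pred {u m : ℕ} (hm : m ≤ u) :
    (u : ℚ) * ((u - 1).choose m : ℚ) = (u.choose m : ℚ) * ((u : ℚ) - m) := by
  rcases u with _ | v
  · simp [Nat.le_zero.mp hm]
  · have h := congrArg (Nat.cast : ℕ → ℚ) (Nat.choose_mul_succ_eq v m)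
    push_cast [Nat.cast_sub hm] at h ⊢
    linear_combination h

theorem liCoeff_succ_succ (s u : ℕ) :
    liCoeff (s + 1) (u + 1) = (u + 1) * liCoeff s (u + 1) - u * liCoeff s u := by
  have hext : (u : ℚ) * liCoeff s u = ∑ n ∈ Icc 1 (u + 1),
      (u : ℚ) * ((-1) ^ n * ((u - 1).choose (n - 1) : ℚ) * (n : ℚ) ^ s) := by
    rw [liCoeff, Finset.mul_sum, Finset.sum_Icc_succ_top (by omega), left_eq_add]
    cases u <;> simp
  rw [hext, liCoeff, liCoeff, Finset.mul_sum, ← Finset.sum_sub_distrib]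
  refine Finset.sum_congr rfl fun n hn => ?_
  rw [Finset.mem_Icc] at hn
  have h := natCast_mul_choose_pred (u := u) (m := n - 1) (by omega)
  push_cast [Nat.cast_sub hn.1] at h
  simp only [Nat.add_sub_cancel, pow_succ]
  linear_combination ((-1) ^ n * (n : ℚ) ^ s) * h

theorem liCoeff_eq_zero_of_add_two_le {s t : ℕ} (h : s + 2 ≤ t) : liCoeff s t = 0 := by
  induction s generalizing t with
  | zero => exact liCoeff_zero_of_two_le h
  | succ s ih =>
    obtain ⟨u, rfl⟩ := Nat.exists_eq_add_of_le' (show 1 ≤ t by omega)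
    rw [liCoeff_succ_succ, ih (by omega), ih (by omega), mul_zero, mul_zero, sub_zero]

theorem liCoeff_eq_sum {s t n : ℕ} (ht₁ : 1 ≤ t) (ht : t ≤ n) :
    liCoeff s t = ∑ k ∈ Icc 1 n, (-1) ^ k * ((t - 1).choose (k - 1) : ℚ) * (k : ℚ) ^ s := by
  refine Finset.sum_subset (Finset.Icc_subset_Icc_right ht) fun k hk hkt => ?_
  rw [mem_Icc] at hk hkt
  rw [Nat.choose_eq_zero_of_lt (by omega), Nat.cast_zero, mul_zero, zero_mul]

theorem coeff_liPoly (s t : ℕ) : (liPoly s).coeff t = liCoeff s t := by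
  induction s generalizing t with
  | zero =>
    rcases t with _ | _ | t
    · simp [liPoly, liCoeff]
    · simp [liPoly, liCoeff]
    · rw [liCoeff_zero_of_two_le (by omega)]
      simp [liPoly, coeff_X]
  | succ s ih =>
    have hD (i : ℕ) : (derivative (liPoly s)).coeff i = liCoeff s (i + 1) * (i + 1) := by
      rw [coeff_derivative, ih]
    rcases t with _ | u
    · simp [liPoly, liCoeff, mul_assoc]
    · rw [liPoly, mul_assoc, coeff_X_mul, sub_mul, one_mul, coeff_sub, liCoeff_succ_succ, hD]
      rcases u with _ | w
      · simp
      · rw [coeff_X_mul, hD]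
        push_cast
        ring

theorem degree_liPoly_le (s : ℕ) : (liPoly s).degree ≤ (s + 1 : ℕ) :=
  degree_le_iff_coeff_zero _ _ |>.mpr fun t ht => by
    rw [coeff_liPoly, liCoeff_eq_zero_of_add_two_le (by exact_mod_cast ht)]

namespace ZMod

variable {p : ℕ}

theorem natCast_self_sq_eq_zero : (p : ZMod (p ^ 2)) ^ 2 = 0 := by
  rw [← Nat.cast_pow, natCast_self]

theorem dvd_natCast_sub_of_natCast_eq {a b : ℕ} (h : (a : ZMod p) = b) :
    (p : ZMod (p ^ 2)) ∣ (a : ZMod (p ^ 2)) - b := by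
  obtain ⟨c, hc⟩ := (intCast_eq_intCast_iff_dvd_sub a b p).mp (by exact_mod_cast h)
  refine ⟨-c, ?_⟩
  have := congrArg (Int.cast : ℤ → ZMod (p ^ 2)) hc
  push_cast at this
  linear_combination -this

theorem natCast_pow_eq_of_natCast_eq {a b : ℕ} (h : (a : ZMod p) = b) :
    (a : ZMod (p ^ 2)) ^ p = (b : ZMod (p ^ 2)) ^ p := by
  have := dvd_sub_pow_of_dvd_sub (dvd_natCast_sub_of_natCast_eq h) 1
  rwa [pow_one, one_add_one_eq_two, natCast_self_sq_eq_zero, zero_dvd_iff, sub_eq_zero] at this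

variable [Fact p.Prime]

theorem natCast_sub_pow_mul_natCast_sub_pow (a b : ℕ) :
    ((a : ZMod (p ^ 2)) - a ^ p) * ((b : ZMod (p ^ 2)) - b ^ p) = 0 := by
  have hfermat (n : ℕ) : (p : ZMod (p ^ 2)) ∣ (n : ZMod (p ^ 2)) - n ^ p := by
    have := dvd_natCast_sub_of_natCast_eq (p := p) (a := n) (b := n ^ p) (by simp [pow_card])
    simpa using this
  have := mul_dvd_mul (hfermat a) (hfermat b)
  rwa [← sq, natCast_self_sq_eq_zero, zero_dvd_iff] at this

theorem natCast_mul_sub_pow (a b : ℕ) :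
    ((a * b : ℕ) : ZMod (p ^ 2)) - ((a * b : ℕ) : ZMod (p ^ 2)) ^ p =
      (b : ZMod (p ^ 2)) ^ p * ((a : ZMod (p ^ 2)) - a ^ p) +
        (a : ZMod (p ^ 2)) ^ p * ((b : ZMod (p ^ 2)) - b ^ p) := by
  push_cast
  linear_combination natCast_sub_pow_mul_natCast_sub_pow (p := p) a b

end ZMod

def mulInvSum (p : ℕ) (k : ZMod p) : ℕ :=
  ∑ j ∈ Icc 1 (p - 1), j * (k * (j : ZMod p)⁻¹).val

section MulInvSum

variable {p : ℕ}

theorem natCast_ne_zero_of_mem_Icc {j : ℕ} (hj : j ∈ Icc 1 (p - 1)) : (j : ZMod p) ≠ 0 := by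
  rw [mem_Icc] at hj
  rw [Ne, ZMod.natCast_eq_zero_iff]
  exact Nat.not_dvd_of_pos_of_lt (by omega) (by omega)

theorem val_natCast_of_mem_Icc {j : ℕ} (hj : j ∈ Icc 1 (p - 1)) : (j : ZMod p).val = j :=
  ZMod.val_natCast_of_lt (by rw [mem_Icc] at hj; omega)

theorem val_mem_Icc [NeZero p] {x : ZMod p} (hx : x ≠ 0) : x.val ∈ Icc 1 (p - 1) := by
  have := ZMod.val_lt x
  have := (ZMod.val_pos (n := p)).mpr hx
  rw [mem_Icc]
  omega

variable [Fact p.Prime]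

theorem val_mul_inv_mem_Icc {k : ZMod p} (hk : k ≠ 0) {j : ℕ} (hj : j ∈ Icc 1 (p - 1)) :
    (k * (j : ZMod p)⁻¹).val ∈ Icc 1 (p - 1) :=
  val_mem_Icc (mul_ne_zero hk (inv_ne_zero (natCast_ne_zero_of_mem_Icc hj)))

theorem val_mul_inv_val_mul_inv {k : ZMod p} (hk : k ≠ 0) {j : ℕ} (hj : j ∈ Icc 1 (p - 1)) :
    (k * ((k * (j : ZMod p)⁻¹).val : ZMod p)⁻¹).val = j := by
  rw [ZMod.natCast_zmod_val, mul_inv_rev, inv_inv, mul_comm (j : ZMod p),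
    mul_inv_cancel_left₀ hk, val_natCast_of_mem_Icc hj]

theorem sum_Icc_ite_eq_mul_eq {M : Type*} [AddCommMonoid M] {k : ZMod p} (hk : k ≠ 0) {j : ℕ}
    (hj : j ∈ Icc 1 (p - 1)) (f : ℕ → M) :
    ∑ l ∈ Icc 1 (p - 1), (if k = j * l then f l else 0) = f (k * (j : ZMod p)⁻¹).val := by
  have hj0 := natCast_ne_zero_of_mem_Icc hj
  refine (Finset.sum_eq_single_of_mem _ (val_mul_inv_mem_Icc hk hj)
    fun l hl hne => if_neg fun h => hne ?_).trans ?_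
  · rw [h, mul_comm (j : ZMod p), mul_inv_cancel_right₀ hj0, val_natCast_of_mem_Icc hl]
  · rw [if_pos (by rw [ZMod.natCast_zmod_val]; field_simp)]

-- `j / ω(j) - 1`, where `ω(j) = j ^ p` is the Teichmüller lift of `j` to `ZMod (p ^ 2)`.
def fermatDefect (p j : ℕ) : ZMod (p ^ 2) :=
  (((j : ZMod p)⁻¹.val : ℕ) : ZMod (p ^ 2)) ^ p * ((j : ZMod (p ^ 2)) - (j : ZMod (p ^ 2)) ^ p)

theorem natCast_mul_val_mul_inv {k : ZMod p} (hk : k ≠ 0) {j : ℕ} (hj : j ∈ Icc 1 (p - 1)) :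
    ((j * (k * (j : ZMod p)⁻¹).val : ℕ) : ZMod (p ^ 2)) = (k.val : ZMod (p ^ 2)) ^ p *
      (1 + fermatDefect p j + fermatDefect p (k * (j : ZMod p)⁻¹).val) := by
  set v := (k * (j : ZMod p)⁻¹).val
  have hj0 := natCast_ne_zero_of_mem_Icc hj
  have hprod : ((j * v : ℕ) : ZMod (p ^ 2)) ^ p = (k.val : ZMod (p ^ 2)) ^ p :=
    ZMod.natCast_pow_eq_of_natCast_eq
      (by simp only [v, Nat.cast_mul, ZMod.natCast_zmod_val]; field_simp)
  have hvp : (v : ZMod (p ^ 2)) ^ p =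
      (k.val : ZMod (p ^ 2)) ^ p * (((j : ZMod p)⁻¹.val : ℕ) : ZMod (p ^ 2)) ^ p := by
    rw [← mul_pow]
    exact_mod_cast ZMod.natCast_pow_eq_of_natCast_eq (by simp [v])
  have hjp : (j : ZMod (p ^ 2)) ^ p =
      (k.val : ZMod (p ^ 2)) ^ p * (((v : ZMod p)⁻¹.val : ℕ) : ZMod (p ^ 2)) ^ p := by
    rw [← mul_pow]
    exact_mod_cast ZMod.natCast_pow_eq_of_natCast_eq
      (by simp only [v, Nat.cast_mul, ZMod.natCast_zmod_val]; field_simp)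
  rw [fermatDefect, fermatDefect]
  linear_combination ZMod.natCast_mul_sub_pow (p := p) j v + hprod
    + ((j : ZMod (p ^ 2)) - (j : ZMod (p ^ 2)) ^ p) * hvp
    + ((v : ZMod (p ^ 2)) - (v : ZMod (p ^ 2)) ^ p) * hjp

theorem natCast_mulInvSum_eq {k : ZMod p} (hk : k ≠ 0) :
    (mulInvSum p k : ZMod (p ^ 2)) = (k.val : ZMod (p ^ 2)) ^ p *
      ((p - 1 : ℕ) + 2 * ∑ j ∈ Icc 1 (p - 1), fermatDefect p j) := by
  have hperm : ∑ j ∈ Icc 1 (p - 1), fermatDefect p (k * (j : ZMod p)⁻¹).val =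
      ∑ j ∈ Icc 1 (p - 1), fermatDefect p j :=
    Finset.sum_nbij' _ _ (fun _ => val_mul_inv_mem_Icc hk) (fun _ => val_mul_inv_mem_Icc hk)
      (fun _ => val_mul_inv_val_mul_inv hk) (fun _ => val_mul_inv_val_mul_inv hk)
      (fun _ _ => rfl)
  rw [mulInvSum, Nat.cast_sum, Finset.sum_congr rfl fun j => natCast_mul_val_mul_inv hk,
    ← Finset.mul_sum, Finset.sum_add_distrib, Finset.sum_add_distrib, hperm, Finset.sum_const,
    Nat.card_Icc, nsmul_eq_mul, mul_one, Nat.add_sub_cancel]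
  ring

theorem mulInvSum_one : mulInvSum p 1 = ∑ j ∈ Icc 1 (p - 1), j * jstar p j := by
  simp [mulInvSum, jstar]

theorem mulInvSum_zero : mulInvSum p 0 = 0 := by
  simp [mulInvSum]

theorem not_dvd_mulInvSum_one : ¬ (p : ℤ) ∣ mulInvSum p 1 := by
  have hsum : ((mulInvSum p 1 : ℕ) : ZMod p) = -1 := by
    have hp := (Fact.out : p.Prime).one_le
    rw [mulInvSum, Nat.cast_sum, Finset.sum_congr rfl fun j hj => ?_, Finset.sum_const,
      Nat.card_Icc, Nat.add_sub_cancel, nsmul_one, Nat.cast_sub hp, ZMod.natCast_self, zero_sub,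
      Nat.cast_one]
    rw [Nat.cast_mul, ZMod.natCast_zmod_val, one_mul,
      mul_inv_cancel₀ (natCast_ne_zero_of_mem_Icc hj)]
  rw [← ZMod.intCast_zmod_eq_zero_iff_dvd, Int.cast_natCast, hsum]
  exact neg_ne_zero.mpr one_ne_zero

theorem sq_dvd_mulInvSum_sub {k : ZMod p} (hk : k ≠ 0) :
    (p : ℤ) ^ 2 ∣ mulInvSum p k - k.val ^ p * mulInvSum p 1 := by
  have hp := (Fact.out : p.Prime).one_lt
  have h1 := natCast_mulInvSum_eq (one_ne_zero (α := ZMod p))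
  rw [ZMod.val_one, Nat.cast_one, one_pow, one_mul] at h1
  have := (ZMod.intCast_zmod_eq_zero_iff_dvd
    (mulInvSum p k - k.val ^ p * mulInvSum p 1 : ℤ) (p ^ 2)).mp (by
      push_cast
      rw [natCast_mulInvSum_eq hk, h1, sub_self])
  exact_mod_cast this

end MulInvSum

section ZLocSpan

variable {q : ℕ} {c : ℚ}

theorem zLocSpan_zero (hq : q ≠ 1) : zLocSpan q c 0 :=
  ⟨0, 1, by exact_mod_cast Nat.dvd_one.not.mpr hq, by simp⟩

theorem zLocSpan_add (hq : q.Prime) {x y : ℚ} (hx : zLocSpan q c x) (hy : zLocSpan q c y) :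
    zLocSpan q c (x + y) := by
  obtain ⟨a, b, hb, hab⟩ := hx
  obtain ⟨a', b', hb', hab'⟩ := hy
  refine ⟨a * b' + a' * b, b * b', fun h => ?_, ?_⟩
  · exact ((Nat.prime_iff_prime_int.mp hq).dvd_mul.mp h).elim hb hb'
  · push_cast
    linear_combination (b' : ℚ) * hab + (b : ℚ) * hab'

theorem zLocSpan_sum (hq : q.Prime) {ι : Type*} (s : Finset ι) {f : ι → ℚ}
    (h : ∀ i ∈ s, zLocSpan q c (f i)) : zLocSpan q c (∑ i ∈ s, f i) :=
  Finset.sum_induction f _ (fun _ _ => zLocSpan_add hq) (zLocSpan_zero hq.one_lt.ne') h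

theorem zLocSpan_intCast_mul (n : ℤ) {x : ℚ} (hx : zLocSpan q c x) : zLocSpan q c (n * x) := by
  obtain ⟨a, b, hb, hab⟩ := hx
  exact ⟨n * a, b, hb, by push_cast; linear_combination (n : ℚ) * hab⟩

end ZLocSpan

theorem cast_choose_div_eq {t k : ℕ} (ht : 1 ≤ t) (hk : 1 ≤ k) :
    (t.choose k : ℚ) / t = ((t - 1).choose (k - 1) : ℚ) / k := by
  have h := Nat.add_one_mul_choose_eq (t - 1) (k - 1)
  rw [Nat.sub_add_cancel ht, Nat.sub_add_cancel hk] at h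
  rw [div_eq_div_iff (by positivity) (by positivity)]
  exact_mod_cast h.symm.trans (mul_comm _ _)

section Coefficients

variable {q : ℕ} [Fact q.Prime]

theorem fqCoeff_eq_sum_mulInvSum (t : ℕ) :
    fqCoeff q t = ∑ k ∈ Icc 1 (q - 1), (-1) ^ k * (t.choose k : ℤ) * mulInvSum q k := by
  rw [fqCoeff, Finset.sum_comm]
  refine Finset.sum_congr rfl fun k hk => ?_
  rw [mulInvSum, Nat.cast_sum, Finset.mul_sum]
  refine Finset.sum_congr rfl fun j hj => ?_
  rw [sum_Icc_ite_eq_mul_eq (natCast_ne_zero_of_mem_Icc hk) hj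
    (fun l => (-1) ^ k * (t.choose k : ℤ) * j * l)]
  push_cast
  ring

theorem fqCoeff_div_eq {t : ℕ} (ht : 1 ≤ t) :
    (fqCoeff q t : ℚ) / t = ∑ k ∈ Icc 1 q,
      (-1) ^ k * ((t - 1).choose (k - 1) : ℚ) * ((mulInvSum q k : ℚ) / k) := by
  rw [fqCoeff_eq_sum_mulInvSum, Int.cast_sum, Finset.sum_div]
  refine Finset.sum_subset_zero_on_sdiff (Finset.Icc_subset_Icc_right (Nat.sub_le q 1))
    (fun k hk => ?_) (fun k hk => ?_)
  · rw [mem_sdiff, mem_Icc, mem_Icc] at hk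
    rw [show k = q by omega, ZMod.natCast_self, mulInvSum_zero, Nat.cast_zero, zero_div, mul_zero]
  push_cast
  linear_combination ((-1) ^ k * (mulInvSum q k : ℚ)) * cast_choose_div_eq ht (mem_Icc.mp hk).1

theorem zLocSpan_mulInvSum_div_sub (hq3 : 3 ≤ q) {k : ℕ} (hk : k ∈ Icc 1 q) :
    zLocSpan q ((q : ℚ) ^ 2)
      ((mulInvSum q k : ℚ) / k - mulInvSum q 1 * (k : ℚ) ^ (q - 1)) := by
  rcases eq_or_ne k q with rfl | hkq
  · refine ⟨-(mulInvSum k 1 * k ^ (k - 3)), 1,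
      by exact_mod_cast Nat.dvd_one.not.mpr (by omega), ?_⟩
    rw [ZMod.natCast_self, mulInvSum_zero]
    push_cast
    rw [show k - 1 = 2 + (k - 3) by omega, pow_add]
    ring
  · have hk' : k ∈ Icc 1 (q - 1) := by rw [mem_Icc] at hk ⊢; omega
    obtain ⟨M, hM⟩ := sq_dvd_mulInvSum_sub (natCast_ne_zero_of_mem_Icc hk')
    rw [val_natCast_of_mem_Icc hk'] at hM
    refine ⟨M, k, ?_, ?_⟩
    · rw [mem_Icc] at hk'
      exact Int.natCast_dvd_natCast.not.mpr (Nat.not_dvd_of_pos_of_lt (by omega) (by omega))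
    · have hM' := congrArg (Int.cast : ℤ → ℚ) hM
      push_cast at hM' ⊢
      rw [sub_mul, div_mul_cancel₀ _ (by have := (mem_Icc.mp hk).1; positivity), mul_assoc,
        pow_sub_one_mul (by omega)]
      linear_combination hM'

theorem zLocSpan_fqCoeff_div_sub (hq3 : 3 ≤ q) {t : ℕ} (ht : t ∈ Icc 1 q) :
    zLocSpan q ((q : ℚ) ^ 2) ((fqCoeff q t : ℚ) / t - mulInvSum q 1 * liCoeff (q - 1) t) := by
  rw [mem_Icc] at ht
  rw [fqCoeff_div_eq ht.1, liCoeff_eq_sum ht.1 ht.2, Finset.mul_sum, ← Finset.sum_sub_distrib]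
  refine zLocSpan_sum Fact.out _ fun k hk => ?_
  have := zLocSpan_intCast_mul ((-1) ^ k * ((t - 1).choose (k - 1) : ℤ))
    (zLocSpan_mulInvSum_div_sub hq3 hk)
  convert this using 1
  push_cast
  ring

end Coefficients

theorem coeff_fqPoly (q t : ℕ) :
    (fqPoly q).coeff t = if t ∈ Icc 1 q then (fqCoeff q t : ℚ) / t else 0 := by
  simp only [fqPoly, finsetSum_coeff, coeff_C_mul_X_pow]
  exact Finset.sum_ite_eq _ _ _

theorem zLocSpan_coeff_fqPoly_sub {q : ℕ} [Fact q.Prime] (hq3 : 3 ≤ q) (t : ℕ) :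
    zLocSpan q ((q : ℚ) ^ 2) ((fqPoly q).coeff t - mulInvSum q 1 * liCoeff (q - 1) t) := by
  rw [coeff_fqPoly]
  split_ifs with ht
  · exact zLocSpan_fqCoeff_div_sub hq3 ht
  · have : liCoeff (q - 1) t = 0 := by
      rw [mem_Icc] at ht
      rcases Nat.eq_zero_or_pos t with rfl | ht₀
      · simp [liCoeff]
      · exact liCoeff_eq_zero_of_add_two_le (by omega)
    rw [this, mul_zero, sub_zero]
    exact zLocSpan_zero (Fact.out : q.Prime).one_lt.ne'

theorem stmt17 (q : ℕ) (hq : q.Prime) (hodd : Odd q) :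
    ∃ h : Polynomial ℚ, h.degree ≤ q ∧
      (∀ x : ℚ, x ≠ 1 → h.eval x = Li (q - 1) (-x / (1 - x))) ∧
      (∀ t : ℕ, zLocSpan q ((q : ℚ)^2)
        ((fqPoly q - Polynomial.C ((∑ j ∈ Finset.Icc 1 (q - 1), (j : ℚ) * (jstar q j : ℚ))) * h).coeff t)) ∧
      ¬ (q : ℤ) ∣ (∑ j ∈ Finset.Icc 1 (q - 1), (j : ℤ) * (jstar q j : ℤ)) := by
  have := Fact.mk hq
  have hq3 : 3 ≤ q := by
    have := hq.two_le
    have := Nat.odd_iff.mp hodd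
    omega
  refine ⟨liPoly (q - 1), ?_, fun x hx => (Li_neg_div_one_sub _ hx).symm, fun t => ?_, ?_⟩
  · exact (degree_liPoly_le _).trans (by exact_mod_cast (Nat.sub_add_cancel hq.one_le).le)
  · rw [coeff_sub, coeff_C_mul, coeff_liPoly]
    exact_mod_cast mulInvSum_one (p := q) ▸ zLocSpan_coeff_fqPoly_sub hq3 t
  · exact_mod_cast mulInvSum_one (p := q) ▸ not_dvd_mulInvSum_one
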